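/- Let G be a finite simple graph on n ≥ 2 vertices with arboricity at most α (α a positive integer) and let ε > 0 be a real number. Then there exist an integer ℓ ≤ ⌈log n / log((2+ε)/2)⌉ and a partition of the vertex set of G into disjoint sets H_1, H_2, …, H_ℓ such that for every j ∈ {1, …, ℓ}, every vertex v ∈ H_j has at most (2+ε)·α neighbors in the union H_j ∪ H_{j+1} ∪ … ∪ H_ℓ. -/

import Mathlib

/-- The number of edges of `G` with both endpoints in the vertex set `S`. -/
def SimpleGraph.edgesWithin {V : Type*} [Fintype V] [DecidableEq V]
    (G : SimpleGraph V) [DecidableRel G.Adj] (S : Finset V) : ℕ :=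
  (G.edgeFinset.filter (fun e => ∀ x ∈ e, x ∈ S)).card

/-- `G` has arboricity at most `α` in the density sense. -/
def SimpleGraph.ArboricityAtMost {V : Type*} [Fintype V] [DecidableEq V]
    (G : SimpleGraph V) [DecidableRel G.Adj] (α : ℕ) : Prop :=
  ∀ S : Finset V, 2 ≤ S.card → G.edgesWithin S ≤ α * (S.card - 1)

/-!
Peel off, round after round, every vertex with at most `D = ⌊(2+ε)α⌋` neighbours among the
vertices still present; the vertices removed in round `i + 1` form the layer `H i`, and the
vertices present in that round are exactly those of the layers `H j`, `j ≥ i`. If `S` is the set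
present in some round, each survivor has at least `D + 1 > (2+ε)α` neighbours in `S`, while the
degrees inside `S` sum to at most `2α(|S| - 1)` by the arboricity bound; so fewer than `|S| / c`
vertices survive, where `c = (2+ε)/2`. After `k` rounds at most `n / c^k` vertices remain, and
none once `c^k ≥ n`.
-/

open Finset Function

namespace SimpleGraph

variable {V : Type*} [Fintype V] [DecidableEq V] (G : SimpleGraph V) [DecidableRel G.Adj]

theorem edgesWithin_eq_card_edgeFinset_induce (S : Finset V) :
    G.edgesWithin S = #(G.induce (S : Set V)).edgeFinset := by
  have h := map_edgeFinset_induce (G := G) (s := (S : Set V))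
  rw [toFinset_coe, ← filter_mem_eq_inter] at h
  simp_rw [mem_sym2_iff] at h
  rw [edgesWithin, ← h, card_map]
  convert rfl -- the two sides differ only in the `Fintype` instance on the edge set

theorem sum_card_neighborFinset_inter_eq_two_mul_edgesWithin (S : Finset V) :
    ∑ v ∈ S, #(G.neighborFinset v ∩ S) = 2 * G.edgesWithin S := by
  rw [edgesWithin_eq_card_edgeFinset_induce, ← sum_degrees_eq_twice_card_edges,
    ← sum_coe_sort S]
  refine Fintype.sum_congr _ _ fun v => ?_
  have h := map_neighborFinset_induce (G := G) (s := (S : Set V)) v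
  rw [toFinset_coe] at h
  rw [← h, card_map, card_neighborFinset_eq_degree]
  convert rfl

theorem ArboricityAtMost.edgesWithin_le {G : SimpleGraph V} [DecidableRel G.Adj] {α : ℕ}
    (h : G.ArboricityAtMost α) (S : Finset V) : G.edgesWithin S ≤ α * (#S - 1) := by
  rcases lt_or_ge #S 2 with hS | hS
  · have := card_edgeFinset_le_card_choose_two (G := G.induce (S : Set V))
    rw [← edgesWithin_eq_card_edgeFinset_induce,
      Nat.choose_eq_zero_of_lt (by simpa using hS)] at this
    omega
  · exact h S hS

def peel (D : ℕ) (S : Finset V) : Finset V := {v ∈ S | D < #(G.neighborFinset v ∩ S)}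

theorem peel_subset (D : ℕ) (S : Finset V) : G.peel D S ⊆ S := filter_subset _ _

theorem card_peel_mul_succ_le {α : ℕ} (harb : G.ArboricityAtMost α) (D : ℕ) (S : Finset V) :
    #(G.peel D S) * (D + 1) ≤ 2 * (α * (#S - 1)) :=
  calc #(G.peel D S) * (D + 1)
      ≤ ∑ v ∈ G.peel D S, #(G.neighborFinset v ∩ S) := by
        rw [← smul_eq_mul]; exact card_nsmul_le_sum _ _ _ fun v hv => (mem_filter.mp hv).2
    _ ≤ ∑ v ∈ S, #(G.neighborFinset v ∩ S) :=
        sum_le_sum_of_subset (G.peel_subset D S)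
    _ = 2 * G.edgesWithin S := G.sum_card_neighborFinset_inter_eq_two_mul_edgesWithin S
    _ ≤ 2 * (α * (#S - 1)) := Nat.mul_le_mul_left 2 (harb.edgesWithin_le S)

def peelIter (D k : ℕ) : Finset V := (G.peel D)^[k] univ

theorem peelIter_succ (D k : ℕ) : G.peelIter D (k + 1) = G.peel D (G.peelIter D k) :=
  Function.iterate_succ_apply' _ _ _

theorem peelIter_antitone (D : ℕ) : Antitone (G.peelIter D) :=
  antitone_nat_of_succ_le fun k => by rw [peelIter_succ]; exact G.peel_subset D _

section Shrinking

variable {G} {α D : ℕ} (harb : G.ArboricityAtMost α) {c : ℝ} (hD : 2 * c * α ≤ D + 1)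
include harb hD

theorem card_peel_mul_lt (hc : 0 ≤ c) {S : Finset V} (hS : S.Nonempty) :
    #(G.peel D S) * c < #S := by
  have hcount : (#(G.peel D S) : ℝ) * (D + 1) ≤ 2 * (α * (#S - 1)) := by
    have := G.card_peel_mul_succ_le harb D S
    rw [← Nat.cast_one, ← Nat.cast_sub hS.card_pos]
    exact_mod_cast this
  have hS1 : (0 : ℝ) ≤ #S - 1 := by
    rw [sub_nonneg, Nat.one_le_cast]
    exact hS.card_pos
  refine lt_of_mul_lt_mul_right (a := (D + 1 : ℝ)) ?_ (by positivity)
  calc (#(G.peel D S) * c : ℝ) * (D + 1) = c * (#(G.peel D S) * (D + 1)) := by ring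
    _ ≤ c * (2 * (α * (#S - 1))) := by gcongr
    _ = 2 * c * α * (#S - 1) := by ring
    _ ≤ (D + 1) * (#S - 1) := by gcongr
    _ < #S * (D + 1) := by linarith

theorem card_peel_mul_le (hc : 0 ≤ c) (S : Finset V) : #(G.peel D S) * c ≤ #S := by
  rcases S.eq_empty_or_nonempty with rfl | hS
  · simp [peel]
  · exact (card_peel_mul_lt harb hD hc hS).le

theorem card_peelIter_mul_pow_le (hc : 0 ≤ c) (k : ℕ) :
    #(G.peelIter D k) * c ^ k ≤ Fintype.card V := by
  induction k with
  | zero => simp [peelIter, card_univ]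
  | succ k ih =>
    calc (#(G.peelIter D (k + 1)) : ℝ) * c ^ (k + 1)
        = #(G.peel D (G.peelIter D k)) * c * c ^ k := by rw [peelIter_succ, pow_succ']; ring
      _ ≤ #(G.peelIter D k) * c ^ k := by
        gcongr
        exact card_peel_mul_le harb hD hc _
      _ ≤ Fintype.card V := ih

theorem peelIter_eq_empty (hc : 0 < c) {k : ℕ} (hk : 0 < k) (hn : Fintype.card V ≤ c ^ k) :
    G.peelIter D k = ∅ := by
  obtain ⟨k, rfl⟩ := Nat.exists_eq_add_one_of_ne_zero hk.ne'
  by_contra hne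
  have hS : (G.peelIter D (k + 1)).Nonempty := nonempty_iff_ne_empty.mpr hne
  have hprev : (G.peelIter D k).Nonempty := hS.mono (G.peelIter_antitone D k.le_succ)
  have hlt : (#(G.peelIter D (k + 1)) : ℝ) * c ^ (k + 1) < c ^ (k + 1) :=
    calc (#(G.peelIter D (k + 1)) : ℝ) * c ^ (k + 1)
        = #(G.peel D (G.peelIter D k)) * c * c ^ k := by rw [peelIter_succ, pow_succ']; ring
      _ < #(G.peelIter D k) * c ^ k := by
        gcongr
        exact card_peel_mul_lt harb hD hc.le hprev
      _ ≤ Fintype.card V := card_peelIter_mul_pow_le harb hD hc.le k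
      _ ≤ c ^ (k + 1) := hn
  rw [mul_lt_iff_lt_one_left (pow_pos hc _), Nat.cast_lt_one] at hlt
  exact hS.card_pos.ne' hlt

end Shrinking

def IsHPartition {ℓ : ℕ} (H : Fin ℓ → Finset V) (d : ℝ) : Prop :=
  (∀ i j, i ≠ j → Disjoint (H i) (H j)) ∧
    (∀ v : V, ∃ i, v ∈ H i) ∧
    ∀ i : Fin ℓ, ∀ v ∈ H i,
      ((Finset.univ.filter (fun u => G.Adj v u ∧ ∃ j : Fin ℓ, i ≤ j ∧ u ∈ H j)).card : ℝ) ≤ d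

def layer (D i : ℕ) : Finset V := G.peelIter D i \ G.peelIter D (i + 1)

theorem pairwise_disjoint_layer (D : ℕ) : Pairwise (Disjoint on G.layer D) :=
  (pairwise_disjoint_on _).mpr fun _ _ hij =>
    disjoint_of_subset_right (sdiff_subset.trans (G.peelIter_antitone D hij)) sdiff_disjoint

theorem exists_lt_mem_layer_of_notMem_peelIter {D n : ℕ} {v : V} (hv : v ∉ G.peelIter D n) :
    ∃ i < n, v ∈ G.layer D i := by
  induction n with
  | zero => exact absurd (mem_univ v) hv
  | succ n ih =>
    by_cases hn : v ∈ G.peelIter D n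
    · exact ⟨n, n.lt_succ_self, mem_sdiff.mpr ⟨hn, hv⟩⟩
    · obtain ⟨i, hi, hvi⟩ := ih hn
      exact ⟨i, hi.trans n.lt_succ_self, hvi⟩

theorem card_neighborFinset_inter_peelIter_le {D i : ℕ} {v : V} (hv : v ∈ G.layer D i) :
    #(G.neighborFinset v ∩ G.peelIter D i) ≤ D := by
  obtain ⟨hvi, hv'⟩ := mem_sdiff.mp hv
  rw [peelIter_succ, peel, mem_filter, not_and, not_lt] at hv'
  exact hv' hvi

theorem isHPartition_layer {D ℓ : ℕ} (hℓ : G.peelIter D ℓ = ∅) {d : ℝ} (hd : D ≤ d) :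
    G.IsHPartition (fun i : Fin ℓ => G.layer D i) d := by
  refine ⟨fun i j hij => G.pairwise_disjoint_layer D (Fin.val_ne_of_ne hij), fun v => ?_,
    fun i v hv => ?_⟩
  · obtain ⟨i, hi, hvi⟩ := G.exists_lt_mem_layer_of_notMem_peelIter (hℓ ▸ notMem_empty v)
    exact ⟨⟨i, hi⟩, hvi⟩
  · have hsub : ({u | G.Adj v u ∧ ∃ j : Fin ℓ, i ≤ j ∧ u ∈ G.layer D j} : Finset V) ⊆
        G.neighborFinset v ∩ G.peelIter D i := by
      intro u hu
      obtain ⟨hadj, j, hij, huj⟩ := (mem_filter.mp hu).2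
      exact mem_inter.mpr
        ⟨(G.mem_neighborFinset v u).mpr hadj, G.peelIter_antitone D hij (mem_sdiff.mp huj).1⟩
    calc (#{u | G.Adj v u ∧ ∃ j : Fin ℓ, i ≤ j ∧ u ∈ G.layer D j} : ℝ)
        ≤ #(G.neighborFinset v ∩ G.peelIter D i) := by exact_mod_cast card_le_card hsub
      _ ≤ D := by exact_mod_cast G.card_neighborFinset_inter_peelIter_le hv
      _ ≤ d := hd

end SimpleGraph

theorem stmt5_general {V : Type*} [Fintype V] [DecidableEq V]
    (G : SimpleGraph V) [DecidableRel G.Adj] (α : ℕ)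
    (ε : ℝ) (hε : 0 < ε) (hn : 2 ≤ Fintype.card V)
    (harb : G.ArboricityAtMost α) :
    ∃ (ℓ : ℕ) (H : Fin ℓ → Finset V),
      ℓ ≤ ⌈Real.log (Fintype.card V) / Real.log ((2 + ε) / 2)⌉₊ ∧
      (∀ i j, i ≠ j → Disjoint (H i) (H j)) ∧
      (∀ v : V, ∃ i, v ∈ H i) ∧
      (∀ i : Fin ℓ, ∀ v ∈ H i,
        ((Finset.univ.filter
            (fun u => G.Adj v u ∧ ∃ j : Fin ℓ, i ≤ j ∧ u ∈ H j)).card : ℝ) ≤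
          (2 + ε) * α) := by
  set c : ℝ := (2 + ε) / 2 with hc
  set ℓ := ⌈Real.log (Fintype.card V) / Real.log c⌉₊
  have hlogc : 0 < Real.log c := Real.log_pos (by rw [hc]; linarith)
  have hlogn : 0 < Real.log (Fintype.card V) := Real.log_pos (by exact_mod_cast hn)
  have hpow : (Fintype.card V : ℝ) ≤ c ^ ℓ :=
    (Real.le_pow_iff_log_le (by positivity) (by positivity)).mpr
      ((div_le_iff₀ hlogc).mp (Nat.le_ceil _))
  have hD : 2 * c * α ≤ ⌊(2 + ε) * α⌋₊ + 1 := by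
    rw [mul_div_cancel₀ _ two_ne_zero]
    exact (Nat.lt_floor_add_one _).le
  have hempty := SimpleGraph.peelIter_eq_empty harb hD (by positivity)
    (Nat.ceil_pos.mpr (div_pos hlogn hlogc)) hpow
  exact ⟨ℓ, _, le_rfl, G.isHPartition_layer hempty (Nat.floor_le (by positivity))⟩

/-- Every `n`-vertex graph (`n ≥ 2`) of arboricity at most `α` admits an `H`-partition
with degree `(2+ε) * α` and size `ℓ ≤ ⌈log n / log ((2+ε)/2)⌉`: the vertex set is
partitioned into disjoint layers `H 0, …, H (ℓ-1)` so that every vertex in layer `i`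
has at most `(2+ε) * α` neighbors in the union of the layers with index `≥ i`. -/
theorem stmt5 {V : Type*} [Fintype V] [DecidableEq V]
    (G : SimpleGraph V) [DecidableRel G.Adj] (α : ℕ) (hα : 0 < α)
    (ε : ℝ) (hε : 0 < ε) (hn : 2 ≤ Fintype.card V)
    (harb : G.ArboricityAtMost α) :
    ∃ (ℓ : ℕ) (H : Fin ℓ → Finset V),
      ℓ ≤ ⌈Real.log (Fintype.card V) / Real.log ((2 + ε) / 2)⌉₊ ∧
      (∀ i j, i ≠ j → Disjoint (H i) (H j)) ∧
      (∀ v : V, ∃ i, v ∈ H i) ∧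
      (∀ i : Fin ℓ, ∀ v ∈ H i,
        ((Finset.univ.filter
            (fun u => G.Adj v u ∧ ∃ j : Fin ℓ, i ≤ j ∧ u ∈ H j)).card : ℝ) ≤
          (2 + ε) * α) :=
  stmt5_general G α ε hε hn harb
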